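/- Let L be a finite lattice that splits strongly, with strong splitting pair (δ, ε). Define f₁(α) = α, and for i ≥ 2 define fᵢ(α₁,...,αᵢ) = 0 if some αⱼ ≤ δ, and fᵢ(α₁,...,αᵢ) = ε otherwise. For each j ∈ ℕ let h⁽ʲ⁾ᵢ = fᵢ for i ≤ j and h⁽ʲ⁾ᵢ = 0 (the constant-zero operation) for i > j. Then each sequence (h⁽ʲ⁾ᵢ)_{i∈ℕ} is admissible, and these sequences are pairwise distinct; hence L admits infinitely many admissible operation sequences. -/
import Mathlib


/-- An operation sequence on a lattice `L`: `f n` is the `(n+1)`-ary operation,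
so `f n` corresponds to the paper's `f_{n+1}`. -/
def OpSeq (L : Type) : Type := ∀ n : ℕ, (Fin (n + 1) → L) → L

/-- Admissibility: (HC1), (HC2), (HC3), (HC4), (HC7), (HC8). -/
def IsAdmissible {L : Type} [CompleteLattice L] (f : OpSeq L) : Prop :=
  -- (HC1)
  (∀ n (α : Fin (n + 1) → L) (k : Fin (n + 1)), f n α ≤ α k) ∧
  -- (HC2) monotonicity
  (∀ n (α β : Fin (n + 1) → L), α ≤ β → f n α ≤ f n β) ∧
  -- (HC3)
  (∀ n (α : Fin (n + 2) → L), f (n + 1) α ≤ f n (fun i => α i.succ)) ∧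
  -- (HC4) symmetry
  (∀ n (α : Fin (n + 1) → L) (π : Equiv.Perm (Fin (n + 1))), f n (α ∘ π) = f n α) ∧
  -- (HC7) join distributivity in each argument
  (∀ n (i : Fin (n + 1)) (α : Fin (n + 1) → L) (S : Set L),
      f n (Function.update α i (sSup S)) = ⨆ b ∈ S, f n (Function.update α i b)) ∧
  -- (HC8)
  (∀ n k (hkn : k ≤ n) (α : Fin (n + 1) → L),
      f k (fun i : Fin (k + 1) =>
        if hi : (i : ℕ) < k then α ⟨i.1, by omega⟩
        else f (n - k) (fun j : Fin (n - k + 1) => α ⟨k + j.1, by have := j.2; omega⟩)) ≤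
      f n α)

/-- `(δ, ε)` is a splitting pair. -/
def IsSplittingPair {L : Type} [Lattice L] [BoundedOrder L] (δ ε : L) : Prop :=
  δ < ⊤ ∧ ⊥ < ε ∧ ∀ α : L, ε ≤ α ∨ α ≤ δ

/-- `L` splits. -/
def Splits (L : Type) [Lattice L] [BoundedOrder L] : Prop :=
  ∃ δ ε : L, IsSplittingPair δ ε

/-- `L` splits strongly. -/
def SplitsStrongly (L : Type) [Lattice L] [BoundedOrder L] : Prop :=
  ∃ δ ε : L, IsSplittingPair δ ε ∧ ε ≤ δ

open Classical in
/-- The sequence built from a strong splitting pair: `f₁ = id`, and for `i ≥ 2`,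
`fᵢ(α) = 0` if some `αⱼ ≤ δ`, and `ε` otherwise. -/
noncomputable def splitSeq {L : Type} [CompleteLattice L] (δ ε : L) : OpSeq L :=
  fun n α => if n = 0 then α 0 else if ∃ j, α j ≤ δ then ⊥ else ε

/-- Truncation at level `j`: `h⁽ʲ⁾ᵢ = Fᵢ` for `i ≤ j`, constant `0` for `i > j`. -/
noncomputable def truncSeq {L : Type} [CompleteLattice L] (F : OpSeq L) (j : ℕ) :
    OpSeq L :=
  fun n α => if n + 1 ≤ j then F n α else ⊥

section Helpers

open Classical

variable {L : Type} [CompleteLattice L] {δ ε : L}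

lemma splitSeq_zero (α : Fin 1 → L) : splitSeq δ ε 0 α = α 0 := by
  simp [splitSeq]

lemma splitSeq_pos {n : ℕ} (hn : n ≠ 0) (α : Fin (n + 1) → L) :
    splitSeq δ ε n α = if ∃ j, α j ≤ δ then ⊥ else ε := by
  simp [splitSeq, hn]

lemma splitSeq_le_eps {n : ℕ} (hn : n ≠ 0) (α : Fin (n + 1) → L) :
    splitSeq δ ε n α ≤ ε := by
  rw [splitSeq_pos hn]; split <;> simp

lemma splitSeq_le_delta {n : ℕ} (hn : n ≠ 0) (hs : ε ≤ δ) (α : Fin (n + 1) → L) :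
    splitSeq δ ε n α ≤ δ :=
  (splitSeq_le_eps hn α).trans hs

lemma trunc_le_delta (j : ℕ) {n : ℕ} (hn : n ≠ 0) (hs : ε ≤ δ) (α : Fin (n + 1) → L) :
    truncSeq (splitSeq δ ε) j n α ≤ δ := by
  unfold truncSeq
  split
  · exact splitSeq_le_delta hn hs α
  · exact bot_le

lemma trunc_adm (h : IsSplittingPair δ ε) (hs : ε ≤ δ) (j : ℕ) :
    IsAdmissible (truncSeq (splitSeq δ ε) j) := by
  obtain ⟨hδ, hε, hsplit⟩ := h
  refine ⟨?_, ?_, ?_, ?_, ?_, ?_⟩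
  · -- HC1
    intro n α k
    unfold truncSeq
    split
    · rcases Nat.eq_zero_or_pos n with hn | hn
      · subst hn
        rw [splitSeq_zero, show k = 0 from Fin.ext (by omega)]
      · rw [splitSeq_pos hn.ne']
        split_ifs with hd
        · exact bot_le
        · push_neg at hd
          exact (hsplit (α k)).resolve_right (hd k)
    · exact bot_le
  · -- HC2
    intro n α β hab
    unfold truncSeq
    split
    · rcases Nat.eq_zero_or_pos n with hn | hn
      · subst hn; rw [splitSeq_zero, splitSeq_zero]; exact hab 0
      · rw [splitSeq_pos hn.ne', splitSeq_pos hn.ne']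
        split_ifs with h1 h2 h2
        · exact le_rfl
        · exact bot_le
        · exfalso; obtain ⟨i, hi⟩ := h2; exact h1 ⟨i, (hab i).trans hi⟩
        · exact le_rfl
    · exact bot_le
  · -- HC3
    intro n α
    unfold truncSeq
    split_ifs with h1 h2 h2
    · rw [splitSeq_pos (Nat.succ_ne_zero n)]
      split_ifs with hd
      · exact bot_le
      · push_neg at hd
        rcases Nat.eq_zero_or_pos n with hn | hn
        · subst hn
          rw [splitSeq_zero]
          exact (hsplit (α (0 : Fin 1).succ)).resolve_right (hd _)
        · rw [splitSeq_pos hn.ne']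
          rw [if_neg (fun ⟨i, hi⟩ => hd _ hi)]
    · omega
    all_goals exact bot_le
  · -- HC4
    intro n α π
    unfold truncSeq
    split
    · rcases Nat.eq_zero_or_pos n with hn | hn
      · subst hn
        rw [splitSeq_zero, splitSeq_zero, Function.comp_apply,
          show π 0 = 0 from Fin.ext (by omega)]
      · rw [splitSeq_pos hn.ne', splitSeq_pos hn.ne']
        have : (∃ i, (α ∘ π) i ≤ δ) ↔ ∃ i, α i ≤ δ := by
          constructor
          · rintro ⟨i, hi⟩; exact ⟨π i, hi⟩
          · rintro ⟨i, hi⟩; exact ⟨π.symm i, by simpa using hi⟩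
        simp only [this]
    · rfl
  · -- HC7
    intro n i α S
    unfold truncSeq
    split
    · rcases Nat.eq_zero_or_pos n with hn | hn
      · subst hn
        rw [splitSeq_zero, show (0 : Fin (0 + 1)) = i from Fin.ext (by omega),
          Function.update_self, sSup_eq_iSup]
        refine iSup_congr fun b => iSup_congr fun _ => ?_
        rw [splitSeq_zero, show (0 : Fin (0 + 1)) = i from Fin.ext (by omega),
          Function.update_self]
      · have key : ∀ b : L, (∃ k, Function.update α i b k ≤ δ) ↔
            (b ≤ δ ∨ ∃ k, k ≠ i ∧ α k ≤ δ) := by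
          intro b
          constructor
          · rintro ⟨k, hk⟩
            rcases eq_or_ne k i with rfl | hki
            · left; simpa using hk
            · right; exact ⟨k, hki, by rwa [Function.update_of_ne hki] at hk⟩
          · rintro (hb | ⟨k, hki, hk⟩)
            · exact ⟨i, by simpa using hb⟩
            · exact ⟨k, by rwa [Function.update_of_ne hki]⟩
        simp only [splitSeq_pos hn.ne', key]
        by_cases hrest : ∃ k, k ≠ i ∧ α k ≤ δ
        · simp [hrest]
        · simp only [hrest, or_false]
          by_cases hS : sSup S ≤ δ
          · rw [if_pos hS]
            symm
            simp only [iSup_eq_bot]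
            intro b hb
            rw [if_pos ((le_sSup hb).trans hS)]
          · rw [if_neg hS]
            rw [sSup_le_iff] at hS
            push_neg at hS
            obtain ⟨b, hbS, hb⟩ := hS
            apply le_antisymm
            · refine le_trans ?_ (le_iSup₂ b hbS)
              rw [if_neg hb]
            · apply iSup₂_le
              intro c _
              split <;> simp
    · symm
      simp
  · -- HC8
    intro n k hkn α
    rcases Nat.eq_zero_or_pos k with hk | hk
    · subst hk
      by_cases hj0 : 0 + 1 ≤ j
      · have key : (truncSeq (splitSeq δ ε) j 0 (fun i : Fin (0 + 1) =>
            if hi : (i : ℕ) < 0 then α ⟨i.1, by omega⟩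
            else truncSeq (splitSeq δ ε) j (n - 0)
              (fun jj : Fin (n - 0 + 1) => α ⟨0 + jj.1, by have := jj.2; omega⟩)))
            = truncSeq (splitSeq δ ε) j (n - 0)
              (fun jj : Fin (n - 0 + 1) => α ⟨0 + jj.1, by have := jj.2; omega⟩) := by
          rw [truncSeq, if_pos hj0, splitSeq, if_pos rfl]
          simp
        rw [key]
        exact le_of_eq (congrArg _ (funext fun i => congrArg α (Fin.ext (Nat.zero_add _))))
      · rw [truncSeq, if_neg hj0]
        exact bot_le
    · by_cases hjk : k + 1 ≤ j
      · rw [truncSeq, if_pos hjk, splitSeq_pos hk.ne']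
        split_ifs with hcond
        · exact bot_le
        · have hnk : n - k = 0 := by
            by_contra hnk
            refine hcond ⟨⟨k, by omega⟩, ?_⟩
            rw [dif_neg (by simp)]
            exact trunc_le_delta j hnk hs _
          have hkn' : k = n := by omega
          subst hkn'
          conv_rhs => rw [truncSeq, if_pos hjk]
          have hno : ¬ ∃ i : Fin (k + 1), α i ≤ δ := by
            rintro ⟨i, hi⟩
            refine hcond ?_
            by_cases hik : (i : ℕ) < k
            · refine ⟨⟨i.1, by omega⟩, ?_⟩
              rw [dif_pos hik]
              have hieq : i = ⟨(⟨i.1, by omega⟩ : Fin (k + 1)).1, by omega⟩ := by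
                exact Fin.ext rfl
              rw [← hieq]
              exact hi
            · refine ⟨⟨k, by omega⟩, ?_⟩
              rw [dif_neg (by simp), truncSeq, if_pos (by omega), splitSeq, if_pos hnk]
              have hieq : i = ⟨k + ((0 : Fin (k - k + 1)) : ℕ), by
                  simp only [Fin.val_zero]; omega⟩ := by
                refine Fin.ext ?_
                simp only [Fin.val_zero]
                have := i.isLt
                omega
              rw [← hieq]
              exact hi
          rw [splitSeq_pos hk.ne', if_neg hno]
      · rw [truncSeq, if_neg hjk]
        exact bot_le

lemma trunc_ne (h : IsSplittingPair δ ε) {j k : ℕ} (hjk : j < k) :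
    truncSeq (splitSeq δ ε) j ≠ truncSeq (splitSeq δ ε) k := by
  obtain ⟨hδ, hε, _⟩ := h
  intro heq
  have := congrFun (congrFun heq j) (fun _ => (⊤ : L))
  rw [truncSeq, truncSeq, if_neg (by omega), if_pos (by omega)] at this
  rcases Nat.eq_zero_or_pos j with hj | hj
  · subst hj
    simp only [splitSeq_zero] at this
    exact (hε.trans_le le_top).ne this
  · rw [splitSeq_pos hj.ne', if_neg] at this
    · exact hε.ne this
    · rintro ⟨i, hi⟩
      exact absurd (le_top.trans hi) hδ.not_ge

end Helpers

theorem strongly_splitting_infinitely_many_admissible (L : Type) [CompleteLattice L]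
    [Finite L] (δ ε : L) (h : IsSplittingPair δ ε) (hs : ε ≤ δ) :
    (∀ j : ℕ, IsAdmissible (truncSeq (splitSeq δ ε) j)) ∧
    (∀ j k : ℕ, j ≠ k → truncSeq (splitSeq δ ε) j ≠ truncSeq (splitSeq δ ε) k) ∧
    {F : OpSeq L | IsAdmissible F}.Infinite := by
  refine ⟨fun j => trunc_adm h hs j, fun j k hjk => ?_, ?_⟩
  · rcases lt_or_gt_of_ne hjk with hlt | hlt
    · exact trunc_ne h hlt
    · exact (trunc_ne h hlt).symm
  · apply Set.infinite_of_injective_forall_mem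
      (f := fun j : ℕ => truncSeq (splitSeq δ ε) j)
    · intro a b hab
      by_contra hne
      rcases lt_or_gt_of_ne hne with hlt | hlt
      · exact trunc_ne h hlt hab
      · exact (trunc_ne h hlt).symm hab
    · intro a
      exact trunc_adm h hs a
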